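/- Let f : ℝ → ℝ be infinitely differentiable, z ∈ ℝ and ξ > 0. For Δx > 0 set f_m = f(z + (2m−1)Δx/2) for m = −2,…,2, define L_{1,0} = f₋₂ − 3f₋₁ + 2f₀, L_{1,1} = L_{1,2} = −f₀ + f₁, L_{2,0} = f₋₂ − 2f₋₁ + f₀, L_{2,1} = f₋₁ − 2f₀ + f₁, L_{2,2} = f₀ − 2f₁ + f₂, and the WENO-NS smoothness indicators β_k(Δx) = ξ·|L_{1,k}| + |L_{2,k}|, k = 0,1,2. Then, as Δx → 0⁺: β₀(Δx) − [ ξ·|Δx·f'(z) − (23/24)Δx³·f'''(z)| + |Δx²·f''(z) − (3/2)Δx³·f'''(z)| ] = O(Δx⁴), β₁(Δx) − [ ξ·|Δx·f'(z) + (1/24)Δx³·f'''(z)| + |Δx²·f''(z) − (1/2)Δx³·f'''(z)| ] = O(Δx⁴), and β₂(Δx) − [ ξ·|Δx·f'(z) + (1/24)Δx³·f'''(z)| + |Δx²·f''(z) + (1/2)Δx³·f'''(z)| ] = O(Δx⁴). -/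

import Mathlib

open Filter Asymptotics Topology

/-- Grid value `f_m = f(z + (2m-1)Δx/2)` at the node `x_{j+m}`, where `z` is the
cell interface `x_{j+1/2}`. -/
noncomputable def gridVal (f : ℝ → ℝ) (z Δx : ℝ) (m : ℤ) : ℝ :=
  f (z + (2 * (m : ℝ) - 1) * Δx / 2)

/-- First-order generalized undivided difference `L_{1,0}f`. -/
noncomputable def L10 (f : ℝ → ℝ) (z Δx : ℝ) : ℝ :=
  gridVal f z Δx (-2) - 3 * gridVal f z Δx (-1) + 2 * gridVal f z Δx 0

/-- First-order generalized undivided difference `L_{1,1}f = L_{1,2}f`. -/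
noncomputable def L11 (f : ℝ → ℝ) (z Δx : ℝ) : ℝ :=
  -gridVal f z Δx 0 + gridVal f z Δx 1

/-- Second-order generalized undivided difference `L_{2,0}f`. -/
noncomputable def L20 (f : ℝ → ℝ) (z Δx : ℝ) : ℝ :=
  gridVal f z Δx (-2) - 2 * gridVal f z Δx (-1) + gridVal f z Δx 0

/-- Second-order generalized undivided difference `L_{2,1}f`. -/
noncomputable def L21 (f : ℝ → ℝ) (z Δx : ℝ) : ℝ :=
  gridVal f z Δx (-1) - 2 * gridVal f z Δx 0 + gridVal f z Δx 1

/-- Second-order generalized undivided difference `L_{2,2}f`. -/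
noncomputable def L22 (f : ℝ → ℝ) (z Δx : ℝ) : ℝ :=
  gridVal f z Δx 0 - 2 * gridVal f z Δx 1 + gridVal f z Δx 2

section Aux

open Filter Asymptotics Topology Set ContDiff

/-- Mean-value bootstrap: if `h 0 = 0` and `deriv h = O(t^n)` near `0`, then `h = O(t^(n+1))`. -/
lemma myStep {h : ℝ → ℝ} (hd : Differentiable ℝ h) (h0 : h 0 = 0) {n : ℕ}
    (hO : (deriv h) =O[𝓝 (0:ℝ)] fun t => t ^ n) :
    h =O[𝓝 (0:ℝ)] fun t => t ^ (n + 1) := by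
  obtain ⟨C, hC0, hCb⟩ := hO.exists_nonneg
  obtain ⟨δ, hδ, hball⟩ := Metric.eventually_nhds_iff.mp hCb.bound
  rw [Asymptotics.isBigO_iff]
  refine ⟨C, Metric.eventually_nhds_iff.mpr ⟨δ, hδ, fun t ht => ?_⟩⟩
  have ht' : |t| < δ := by simpa [Real.dist_eq] using ht
  have key : ∀ x ∈ uIcc (0:ℝ) t, ‖deriv h x‖ ≤ C * |t| ^ n := by
    intro x hx
    have hxt : |x| ≤ |t| := by
      rcases Set.mem_uIcc.mp hx with ⟨h1, h2⟩ | ⟨h1, h2⟩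
      · rw [abs_of_nonneg h1]; exact le_trans h2 (le_abs_self t)
      · rw [abs_of_nonpos h2]; exact le_trans (neg_le_neg h1) (neg_le_abs t)
    have hxδ : dist x 0 < δ := by simpa [Real.dist_eq] using lt_of_le_of_lt hxt ht'
    calc ‖deriv h x‖ ≤ C * ‖x ^ n‖ := hball hxδ
      _ ≤ C * |t| ^ n := by
          rw [Real.norm_eq_abs, abs_pow]
          exact mul_le_mul_of_nonneg_left (pow_le_pow_left₀ (abs_nonneg x) hxt n) hC0
  have mvt := (convex_uIcc (0:ℝ) t).norm_image_sub_le_of_norm_deriv_le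
    (fun x _ => hd.differentiableAt) key left_mem_uIcc right_mem_uIcc
  calc ‖h t‖ = ‖h t - h 0‖ := by rw [h0, sub_zero]
    _ ≤ C * |t| ^ n * ‖t - 0‖ := mvt
    _ = C * ‖t ^ (n + 1)‖ := by
        rw [sub_zero, Real.norm_eq_abs, Real.norm_eq_abs, abs_pow]; ring

lemma taylorO1 {g : ℝ → ℝ} (hg : ContDiff ℝ ∞ g) :
    (fun t => g t - g 0) =O[𝓝 (0:ℝ)] fun t => t ^ 1 := by
  have hdiff := (contDiff_infty_iff_deriv.mp hg).1
  apply myStep (hdiff.sub_const _) (by simp)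
  have hder : deriv (fun t => g t - g 0) = deriv g := by
    funext t; exact deriv_sub_const (g 0)
  rw [hder, show (fun t : ℝ => t ^ 0) = (fun _ : ℝ => (1:ℝ)) from funext fun t => pow_zero t]
  exact ((contDiff_infty_iff_deriv.mp hg).2.continuous.tendsto 0).isBigO_one ℝ

lemma taylorO2 {g : ℝ → ℝ} (hg : ContDiff ℝ ∞ g) :
    (fun t => g t - g 0 - t * deriv g 0) =O[𝓝 (0:ℝ)] fun t => t ^ 2 := by
  have hdiff := (contDiff_infty_iff_deriv.mp hg).1
  have hd : Differentiable ℝ (fun t => g t - g 0 - t * deriv g 0) :=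
    (hdiff.sub_const _).sub (differentiable_id.mul_const _)
  apply myStep hd (by simp)
  have hder : deriv (fun t => g t - g 0 - t * deriv g 0) = fun t => deriv g t - deriv g 0 := by
    funext t
    have h1 : HasDerivAt (fun t => g t - g 0 - t * deriv g 0) (deriv g t - deriv g 0) t := by
      exact (((hdiff t).hasDerivAt.sub_const (g 0)).sub
        ((hasDerivAt_id t).mul_const (deriv g 0))).congr_deriv (by simp)
    exact h1.deriv
  rw [hder]
  exact taylorO1 (contDiff_infty_iff_deriv.mp hg).2

lemma taylorO3 {g : ℝ → ℝ} (hg : ContDiff ℝ ∞ g) :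
    (fun t => g t - g 0 - t * deriv g 0 - t ^ 2 / 2 * iteratedDeriv 2 g 0)
      =O[𝓝 (0:ℝ)] fun t => t ^ 3 := by
  have hdiff := (contDiff_infty_iff_deriv.mp hg).1
  have hd : Differentiable ℝ (fun t => g t - g 0 - t * deriv g 0
      - t ^ 2 / 2 * iteratedDeriv 2 g 0) :=
    (((hdiff.sub_const _).sub (differentiable_id.mul_const _)).sub
      (((differentiable_pow 2).div_const 2).mul_const _))
  apply myStep hd (by simp)
  have hder : deriv (fun t => g t - g 0 - t * deriv g 0 - t ^ 2 / 2 * iteratedDeriv 2 g 0)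
      = fun t => deriv g t - deriv g 0 - t * iteratedDeriv 2 g 0 := by
    funext t
    have h1 : HasDerivAt (fun t => g t - g 0 - t * deriv g 0 - t ^ 2 / 2 * iteratedDeriv 2 g 0)
        (deriv g t - deriv g 0 - t * iteratedDeriv 2 g 0) t := by
      have hp : HasDerivAt (fun t : ℝ => t ^ 2 / 2 * iteratedDeriv 2 g 0)
          (t * iteratedDeriv 2 g 0) t := by
        simpa [mul_comm, mul_div_assoc] using
          (((hasDerivAt_pow 2 t).div_const 2).mul_const (iteratedDeriv 2 g 0))
      exact (((hdiff t).hasDerivAt.sub_const (g 0)).sub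
        ((hasDerivAt_id t).mul_const (deriv g 0) |>.congr_deriv (one_mul _))).sub hp
    exact h1.deriv
  rw [hder]
  have h2 : iteratedDeriv 2 g 0 = deriv (deriv g) 0 := by
    rw [iteratedDeriv_succ', iteratedDeriv_one]
  rw [h2]
  exact taylorO2 (contDiff_infty_iff_deriv.mp hg).2

lemma taylorO4 {g : ℝ → ℝ} (hg : ContDiff ℝ ∞ g) :
    (fun t => g t - g 0 - t * deriv g 0 - t ^ 2 / 2 * iteratedDeriv 2 g 0
      - t ^ 3 / 6 * iteratedDeriv 3 g 0) =O[𝓝 (0:ℝ)] fun t => t ^ 4 := by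
  have hdiff := (contDiff_infty_iff_deriv.mp hg).1
  have hd : Differentiable ℝ (fun t => g t - g 0 - t * deriv g 0
      - t ^ 2 / 2 * iteratedDeriv 2 g 0 - t ^ 3 / 6 * iteratedDeriv 3 g 0) :=
    ((((hdiff.sub_const _).sub (differentiable_id.mul_const _)).sub
      (((differentiable_pow 2).div_const 2).mul_const _)).sub
      (((differentiable_pow 3).div_const 6).mul_const _))
  apply myStep hd (by simp)
  have hder : deriv (fun t => g t - g 0 - t * deriv g 0 - t ^ 2 / 2 * iteratedDeriv 2 g 0
      - t ^ 3 / 6 * iteratedDeriv 3 g 0)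
      = fun t => deriv g t - deriv g 0 - t * iteratedDeriv 2 g 0
        - t ^ 2 / 2 * iteratedDeriv 3 g 0 := by
    funext t
    have hp2 : HasDerivAt (fun t : ℝ => t ^ 2 / 2 * iteratedDeriv 2 g 0)
        (t * iteratedDeriv 2 g 0) t := by
      simpa [mul_comm, mul_div_assoc] using
        (((hasDerivAt_pow 2 t).div_const 2).mul_const (iteratedDeriv 2 g 0))
    have hp3 : HasDerivAt (fun t : ℝ => t ^ 3 / 6 * iteratedDeriv 3 g 0)
        (t ^ 2 / 2 * iteratedDeriv 3 g 0) t := by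
      have := ((hasDerivAt_pow 3 t).div_const 6).mul_const (iteratedDeriv 3 g 0)
      refine this.congr_deriv ?_
      simp only [Nat.cast_ofNat, show (3:ℕ) - 1 = 2 from rfl]
      ring
    have h1 : HasDerivAt (fun t => g t - g 0 - t * deriv g 0 - t ^ 2 / 2 * iteratedDeriv 2 g 0
        - t ^ 3 / 6 * iteratedDeriv 3 g 0)
        (deriv g t - deriv g 0 - t * iteratedDeriv 2 g 0 - t ^ 2 / 2 * iteratedDeriv 3 g 0) t :=
      ((((hdiff t).hasDerivAt.sub_const (g 0)).sub
        ((hasDerivAt_id t).mul_const (deriv g 0) |>.congr_deriv (one_mul _))).sub hp2).sub hp3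
    exact h1.deriv
  rw [hder]
  have h2 : iteratedDeriv 2 g 0 = deriv (deriv g) 0 := by
    rw [iteratedDeriv_succ', iteratedDeriv_one]
  have h3 : iteratedDeriv 3 g 0 = iteratedDeriv 2 (deriv g) 0 := by
    rw [iteratedDeriv_succ']
  rw [h2, h3]
  exact taylorO3 (contDiff_infty_iff_deriv.mp hg).2

/-- Third-order Taylor expansion at a node `z + c·Δx`. -/
lemma nodeTaylor (f : ℝ → ℝ) (hf : ContDiff ℝ ∞ f) (z c : ℝ) :
    (fun Δx : ℝ => f (z + c * Δx) -
      (f z + c * Δx * deriv f z + c ^ 2 * Δx ^ 2 / 2 * iteratedDeriv 2 f z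
        + c ^ 3 * Δx ^ 3 / 6 * iteratedDeriv 3 f z)) =O[𝓝 (0:ℝ)] fun Δx => Δx ^ 4 := by
  have hshift : ContDiff ℝ ∞ (fun u => f (z + u)) :=
    hf.comp (contDiff_const.add contDiff_id)
  set g : ℝ → ℝ := fun t => f (z + c * t) with hgdef
  have hg : ContDiff ℝ ∞ g := hshift.comp (contDiff_const.mul contDiff_id)
  have hgk : ∀ n : ℕ, iteratedDeriv n g 0 = c ^ n * iteratedDeriv n f z := by
    intro n
    have h1 : iteratedDeriv n g 0
        = c ^ n * iteratedDeriv n (fun u => f (z + u)) (c * 0) := by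
      have := iteratedDeriv_comp_const_mul (n := n) (hshift.of_le (by exact_mod_cast le_top)) c
      exact congrFun this 0 ▸ rfl
    rw [h1, iteratedDeriv_comp_const_add]
    simp
  have hg0 : g 0 = f z := by simp [hgdef]
  have hg1 : deriv g 0 = c * deriv f z := by
    have := hgk 1
    rwa [iteratedDeriv_one, iteratedDeriv_one, pow_one] at this
  have h4 := taylorO4 hg
  refine h4.congr' (Filter.Eventually.of_forall fun t => ?_) (Filter.EventuallyEq.refl _ _)
  rw [hg0, hg1, hgk 2, hgk 3]
  show f (z + c * t) - f z - t * (c * deriv f z) - t ^ 2 / 2 * (c ^ 2 * iteratedDeriv 2 f z)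
      - t ^ 3 / 6 * (c ^ 3 * iteratedDeriv 3 f z) = _
  ring

lemma absO {l : Filter ℝ} {a b p : ℝ → ℝ} (h : (fun x => a x - b x) =O[l] p) :
    (fun x => |a x| - |b x|) =O[l] p := by
  refine IsBigO.trans ?_ h
  refine Asymptotics.IsBigO.of_bound 1 (Filter.Eventually.of_forall fun x => ?_)
  rw [one_mul, Real.norm_eq_abs, Real.norm_eq_abs]
  exact abs_abs_sub_abs_le_abs_sub _ _

end Aux

/-- Taylor expansions of the WENO-NS local smoothness indicators
`β_k = ξ|L_{1,k}f| + |L_{2,k}f|`, `k = 0,1,2`, as `Δx → 0⁺`. -/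
theorem wenoNS_beta_expansion (f : ℝ → ℝ) (hf : ContDiff ℝ (⊤ : ℕ∞) f) (z : ℝ) (ξ : ℝ)
    (hξ : 0 < ξ) :
    ((fun Δx : ℝ => (ξ * |L10 f z Δx| + |L20 f z Δx|) -
        (ξ * |Δx * deriv f z - (23 / 24) * Δx ^ 3 * iteratedDeriv 3 f z|
          + |Δx ^ 2 * iteratedDeriv 2 f z - (3 / 2) * Δx ^ 3 * iteratedDeriv 3 f z|))
        =O[𝓝[>] (0 : ℝ)] fun Δx => Δx ^ 4) ∧
    ((fun Δx : ℝ => (ξ * |L11 f z Δx| + |L21 f z Δx|) -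
        (ξ * |Δx * deriv f z + (1 / 24) * Δx ^ 3 * iteratedDeriv 3 f z|
          + |Δx ^ 2 * iteratedDeriv 2 f z - (1 / 2) * Δx ^ 3 * iteratedDeriv 3 f z|))
        =O[𝓝[>] (0 : ℝ)] fun Δx => Δx ^ 4) ∧
    ((fun Δx : ℝ => (ξ * |L11 f z Δx| + |L22 f z Δx|) -
        (ξ * |Δx * deriv f z + (1 / 24) * Δx ^ 3 * iteratedDeriv 3 f z|
          + |Δx ^ 2 * iteratedDeriv 2 f z + (1 / 2) * Δx ^ 3 * iteratedDeriv 3 f z|))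
        =O[𝓝[>] (0 : ℝ)] fun Δx => Δx ^ 4) := by
  have hE : ∀ c : ℝ, (fun Δx : ℝ => f (z + c * Δx) -
      (f z + c * Δx * deriv f z + c ^ 2 * Δx ^ 2 / 2 * iteratedDeriv 2 f z
        + c ^ 3 * Δx ^ 3 / 6 * iteratedDeriv 3 f z)) =O[𝓝 (0:ℝ)] fun Δx => Δx ^ 4 :=
    fun c => nodeTaylor f (hf.of_le (by simp)) z c
  have hL10 : (fun Δx : ℝ => L10 f z Δx -
      (Δx * deriv f z - 23 / 24 * Δx ^ 3 * iteratedDeriv 3 f z)) =O[𝓝 (0:ℝ)]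
      fun Δx => Δx ^ 4 := by
    have comb := ((hE (-5/2)).sub ((hE (-3/2)).const_mul_left 3)).add
      ((hE (-1/2)).const_mul_left 2)
    refine comb.congr' (Filter.Eventually.of_forall fun t => ?_)
      (Filter.EventuallyEq.refl _ _)
    simp only [L10, gridVal, Int.cast_neg, Int.cast_ofNat, Int.cast_zero, Int.cast_one,
      Int.cast_two]
    push_cast
    ring_nf
  have hL11 : (fun Δx : ℝ => L11 f z Δx -
      (Δx * deriv f z + 1 / 24 * Δx ^ 3 * iteratedDeriv 3 f z)) =O[𝓝 (0:ℝ)]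
      fun Δx => Δx ^ 4 := by
    have comb := ((hE (-1/2)).const_mul_left (-1)).add (hE (1/2))
    refine comb.congr' (Filter.Eventually.of_forall fun t => ?_)
      (Filter.EventuallyEq.refl _ _)
    simp only [L11, gridVal, Int.cast_neg, Int.cast_zero, Int.cast_one]
    push_cast
    ring_nf
  have hL20 : (fun Δx : ℝ => L20 f z Δx -
      (Δx ^ 2 * iteratedDeriv 2 f z - 3 / 2 * Δx ^ 3 * iteratedDeriv 3 f z)) =O[𝓝 (0:ℝ)]
      fun Δx => Δx ^ 4 := by
    have comb := ((hE (-5/2)).sub ((hE (-3/2)).const_mul_left 2)).add (hE (-1/2))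
    refine comb.congr' (Filter.Eventually.of_forall fun t => ?_)
      (Filter.EventuallyEq.refl _ _)
    simp only [L20, gridVal, Int.cast_neg, Int.cast_zero, Int.cast_one]
    push_cast
    ring_nf
  have hL21 : (fun Δx : ℝ => L21 f z Δx -
      (Δx ^ 2 * iteratedDeriv 2 f z - 1 / 2 * Δx ^ 3 * iteratedDeriv 3 f z)) =O[𝓝 (0:ℝ)]
      fun Δx => Δx ^ 4 := by
    have comb := ((hE (-3/2)).sub ((hE (-1/2)).const_mul_left 2)).add (hE (1/2))
    refine comb.congr' (Filter.Eventually.of_forall fun t => ?_)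
      (Filter.EventuallyEq.refl _ _)
    simp only [L21, gridVal, Int.cast_neg, Int.cast_zero, Int.cast_one]
    push_cast
    ring_nf
  have hL22 : (fun Δx : ℝ => L22 f z Δx -
      (Δx ^ 2 * iteratedDeriv 2 f z + 1 / 2 * Δx ^ 3 * iteratedDeriv 3 f z)) =O[𝓝 (0:ℝ)]
      fun Δx => Δx ^ 4 := by
    have comb := ((hE (-1/2)).sub ((hE (1/2)).const_mul_left 2)).add (hE (3/2))
    refine comb.congr' (Filter.Eventually.of_forall fun t => ?_)
      (Filter.EventuallyEq.refl _ _)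
    simp only [L22, gridVal, Int.cast_neg, Int.cast_zero, Int.cast_one, Int.cast_two]
    push_cast
    ring_nf
  refine ⟨?_, ?_, ?_⟩
  · have comb := ((absO hL10).const_mul_left ξ).add (absO hL20)
    exact ((comb.congr' (Filter.Eventually.of_forall fun t => by ring)
      (Filter.EventuallyEq.refl _ _)).mono nhdsWithin_le_nhds)
  · have comb := ((absO hL11).const_mul_left ξ).add (absO hL21)
    exact ((comb.congr' (Filter.Eventually.of_forall fun t => by ring)
      (Filter.EventuallyEq.refl _ _)).mono nhdsWithin_le_nhds)
  · have comb := ((absO hL11).const_mul_left ξ).add (absO hL22)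
    exact ((comb.congr' (Filter.Eventually.of_forall fun t => by ring)
      (Filter.EventuallyEq.refl _ _)).mono nhdsWithin_le_nhds)
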